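/- Let n = 2^m. The number of integer points in the Hadamard polytope satisfies |Had ∩ ℤ^n| ≤ (m+1) · 2^{m + 4m^2} = n^{O(log n)}. -/

import Mathlib

open scoped BigOperators Classical

noncomputable section

/-- `F m` is the vector space `𝔽₂^m`. -/
abbrev F (m : ℕ) := Fin m → ZMod 2

/-- The standard dot product on `𝔽₂^m`. -/
def dotF {m : ℕ} (a b : F m) : ZMod 2 := ∑ i, a i * b i

/-- `had c` is the column of the Hadamard matrix indexed by `c`: `had c a = (-1)^⟨a,c⟩`. -/
def had {m : ℕ} (c : F m) : F m → ℝ := fun a => (-1 : ℝ) ^ (dotF a c).val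

/-- The Hadamard polytope: the convex hull of the columns of the Hadamard matrix. -/
def Had (m : ℕ) : Set (F m → ℝ) := convexHull ℝ (Set.range (had (m := m)))

/-- A vector has all integer coordinates. -/
def IsIntPoint {ι : Type*} (v : ι → ℝ) : Prop := ∀ a, ∃ z : ℤ, v a = z

lemma zmod2_cases (x : ZMod 2) : x = 0 ∨ x = 1 := by revert x; decide

lemma zmod2_val_zero : (0 : ZMod 2).val = 0 := rfl
lemma zmod2_val_one : (1 : ZMod 2).val = 1 := rfl
lemma zmod2_val_two : (1 + 1 : ZMod 2).val = 0 := rfl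
lemma zmod2_val_two' : (2 : ZMod 2).val = 0 := rfl

lemma neg_one_pow_val_add (x y : ZMod 2) :
    ((-1 : ℝ)) ^ ((x + y).val) = (-1 : ℝ) ^ x.val * (-1 : ℝ) ^ y.val := by
  rcases zmod2_cases x with hx | hx <;> rcases zmod2_cases y with hy | hy <;>
    subst hx <;> subst hy <;>
    norm_num [zmod2_val_zero, zmod2_val_one, zmod2_val_two, zmod2_val_two']

lemma dotF_add_left {m : ℕ} (a b c : F m) : dotF (a + b) c = dotF a c + dotF b c := by
  simp [dotF, add_mul, Finset.sum_add_distrib]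

lemma dotF_zero_left {m : ℕ} (c : F m) : dotF (0 : F m) c = 0 := by
  simp [dotF]

lemma had_add {m : ℕ} (c a b : F m) : had c (a + b) = had c a * had c b := by
  simp [had, dotF_add_left, neg_one_pow_val_add]

lemma had_zero {m : ℕ} (c : F m) : had c 0 = 1 := by
  simp [had, dotF_zero_left]

lemma had_pm {m : ℕ} (c a : F m) : had c a = 1 ∨ had c a = -1 := by
  rcases zmod2_cases (dotF a c) with h | h <;> simp [had, h, zmod2_val_zero, zmod2_val_one]

/-- Every integer point of the Hadamard polytope is a signed indicator of a subspace. -/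
lemma exists_rep {m : ℕ} {v : F m → ℝ} (hv : v ∈ Had m) (hi : IsIntPoint v) :
    ∃ (V : Submodule (ZMod 2) (F m)) (c : F m),
      v = fun a => if a ∈ V then ((-1 : ℝ) ^ (dotF a c).val) else 0 := by
  classical
  set T : Finset (F m → ℝ) := Finset.univ.image had with hT
  have hrange : Set.range (had (m := m)) = (T : Set (F m → ℝ)) := by
    simp [hT]
  rw [Had, hrange] at hv
  obtain ⟨w, hw0, hw1, hwc⟩ := Finset.mem_convexHull.mp hv
  have hmemT : ∀ y ∈ T, ∃ c : F m, y = had c := by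
    intro y hy
    rcases Finset.mem_image.mp hy with ⟨c, _, rfl⟩
    exact ⟨c, rfl⟩
  have hsum : ∀ a, v a = ∑ y ∈ T, w y * y a := by
    intro a
    have : T.centerMass w id = ∑ y ∈ T, w y • id y := Finset.centerMass_eq_of_sum_1 _ _ hw1
    rw [this] at hwc
    have := congrFun hwc a
    simpa [Finset.sum_apply] using this.symm
  -- values of columns are ±1
  have hypm : ∀ y ∈ T, ∀ a, y a = 1 ∨ y a = -1 := by
    intro y hy a
    rcases hmemT y hy with ⟨c, rfl⟩
    exact had_pm c a
  -- |v a| ≤ 1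
  have habs : ∀ a, |v a| ≤ 1 := by
    intro a
    rw [hsum a]
    calc |∑ y ∈ T, w y * y a| ≤ ∑ y ∈ T, |w y * y a| := Finset.abs_sum_le_sum_abs _ _
      _ = ∑ y ∈ T, w y := by
          refine Finset.sum_congr rfl fun y hy => ?_
          rcases hypm y hy a with h | h <;>
            simp [h, abs_mul, abs_of_nonneg (hw0 y hy)]
      _ = 1 := hw1
  -- v a ≠ 0 implies v a = ±1
  have hpm : ∀ a, v a ≠ 0 → v a * v a = 1 := by
    intro a ha
    obtain ⟨z, hz⟩ := hi a
    have h1 : |z| ≤ 1 := by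
      have := habs a
      rw [hz] at this
      exact_mod_cast (by exact_mod_cast this : (|z| : ℝ) ≤ 1)
    have hz0 : z ≠ 0 := by rintro rfl; simp at hz; exact ha hz
    have : z = 1 ∨ z = -1 := by
      rcases abs_le.mp h1 with ⟨hl, hr⟩; omega
    rcases this with h | h <;> rw [hz, h] <;> norm_num
  -- step B: on the support of v, all supported columns agree with v
  have stepB : ∀ a, v a ≠ 0 → ∀ y ∈ T, w y ≠ 0 → y a = v a := by
    intro a ha y hyT hwy
    have hva : v a * v a = 1 := hpm a ha
    have key : ∑ y ∈ T, w y * (1 - v a * y a) = 0 := by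
      have : ∑ y ∈ T, w y * (1 - v a * y a)
          = (∑ y ∈ T, w y) - v a * ∑ y ∈ T, w y * y a := by
        rw [Finset.mul_sum, ← Finset.sum_sub_distrib]
        refine Finset.sum_congr rfl fun y _ => by ring
      rw [this, hw1, ← hsum a, hva]; ring
    have hnn : ∀ y ∈ T, 0 ≤ w y * (1 - v a * y a) := by
      intro y hy
      refine mul_nonneg (hw0 y hy) ?_
      have hv1 : v a = 1 ∨ v a = -1 := by
        rcases mul_self_eq_one_iff.mp hva with h | h
        · exact Or.inl h
        · exact Or.inr h
      rcases hv1 with h | h <;> rcases hypm y hy a with h' | h' <;>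
        rw [h, h'] <;> norm_num
    have hzero := (Finset.sum_eq_zero_iff_of_nonneg hnn).mp key y hyT
    have h1 : v a * y a = 1 := by
      rcases mul_eq_zero.mp hzero with h | h
      · exact absurd h hwy
      · linarith [h]
    calc y a = (v a * v a) * y a := by rw [hva]; ring
      _ = v a * (v a * y a) := by ring
      _ = v a := by rw [h1]; ring
  -- pick a supported column
  have hex : ∃ y ∈ T, w y ≠ 0 := by
    apply Finset.exists_ne_zero_of_sum_ne_zero
    rw [hw1]; norm_num
  obtain ⟨y₀, hy₀T, hy₀⟩ := hex
  obtain ⟨c₀, rfl⟩ := hmemT y₀ hy₀T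
  -- the support set
  set S : Set (F m) := {a | ∀ y ∈ T, w y ≠ 0 → y a = had c₀ a} with hS
  have hzero_mem : (0 : F m) ∈ S := by
    intro y hy hwy
    rcases hmemT y hy with ⟨c, rfl⟩
    rw [had_zero, had_zero]
  have hadd_mem : ∀ a b : F m, a ∈ S → b ∈ S → a + b ∈ S := by
    intro a b ha hb y hy hwy
    rcases hmemT y hy with ⟨c, rfl⟩
    rw [had_add, had_add, ha _ hy hwy, hb _ hy hwy]
  refine ⟨{ carrier := S
            add_mem' := fun {a b} ha hb => hadd_mem a b ha hb
            zero_mem' := hzero_mem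
            smul_mem' := by
              intro c x hx
              rcases zmod2_cases c with h | h <;> subst h
              · simpa using hzero_mem
              · simpa using hx }, c₀, ?_⟩
  funext a
  split_ifs with hmem
  · have ha : a ∈ S := hmem
    rw [hsum a]
    have : ∀ y ∈ T, w y * y a = w y * had c₀ a := by
      intro y hy
      by_cases hwy : w y = 0
      · rw [hwy]; ring
      · rw [ha y hy hwy]
    rw [Finset.sum_congr rfl this, ← Finset.sum_mul, hw1, one_mul]
    rfl
  · have ha : a ∉ S := hmem
    by_contra hva
    apply ha
    intro y hy hwy
    rw [stepB a hva y hy hwy, stepB a hva _ hy₀T hy₀]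
  
/-- Every subspace of `𝔽₂^m` is spanned by `m` vectors. -/
lemma exists_span_fun {m : ℕ} (V : Submodule (ZMod 2) (F m)) :
    ∃ g : Fin m → F m, Submodule.span (ZMod 2) (Set.range g) = V := by
  classical
  set k := Module.finrank (ZMod 2) V with hkdef
  have hk : k ≤ m := by
    have h1 := Submodule.finrank_le V
    have h2 : Module.finrank (ZMod 2) (F m) = m := by
      simp [Module.finrank_pi]
    rw [h2] at h1
    exact h1
  let b := Module.finBasis (ZMod 2) V
  refine ⟨fun i => if h : (i : ℕ) < k then (b ⟨i, h⟩ : F m) else 0, ?_⟩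
  apply le_antisymm
  · rw [Submodule.span_le]
    rintro x ⟨i, rfl⟩
    by_cases h : (i : ℕ) < k
    · simp only [dif_pos h]
      exact (b ⟨i, h⟩).2
    · simp only [dif_neg h]
      exact V.zero_mem
  · have h1 : Submodule.map V.subtype ⊤ = V := by
      rw [Submodule.map_top, Submodule.range_subtype]
    have h2 : Submodule.span (ZMod 2) (Set.range b) = ⊤ := b.span_eq
    have h3 : V = Submodule.span (ZMod 2) (V.subtype '' Set.range b) := by
      rw [← Submodule.map_span, h2, h1]
    refine h3.le.trans (Submodule.span_mono ?_)
    rintro x ⟨_, ⟨j, rfl⟩, rfl⟩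
    refine ⟨⟨(j : ℕ), lt_of_lt_of_le j.2 hk⟩, ?_⟩
    simp only [dif_pos j.2, Fin.eta]
    rw [dif_pos (show (j : ℕ) < k from j.2)]
    rfl

theorem card_int_points_Had_upper (m : ℕ) :
    Nat.card {v : F m → ℝ // v ∈ Had m ∧ IsIntPoint v} ≤
      (m + 1) * 2 ^ (m + 4 * m ^ 2) := by
  classical
  -- injection from integer points into (Submodule × F m)
  have hΦ : ∀ x : {v : F m → ℝ // v ∈ Had m ∧ IsIntPoint v},
      ∃ p : Submodule (ZMod 2) (F m) × F m,
        x.1 = fun a => if a ∈ p.1 then ((-1 : ℝ) ^ (dotF a p.2).val) else 0 := by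
    intro x
    obtain ⟨V, c, h⟩ := exists_rep x.2.1 x.2.2
    exact ⟨(V, c), h⟩
  set Φ : {v : F m → ℝ // v ∈ Had m ∧ IsIntPoint v} →
      Submodule (ZMod 2) (F m) × F m := fun x => (hΦ x).choose with hΦdef
  have hΦinj : Function.Injective Φ := by
    intro x y hxy
    have hxy' : (hΦ x).choose = (hΦ y).choose := hxy
    apply Subtype.ext
    rw [(hΦ x).choose_spec, (hΦ y).choose_spec, hxy']
  haveI : Finite (Submodule (ZMod 2) (F m)) :=
    Finite.of_injective (fun V => (V : Set (F m))) SetLike.coe_injective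
  have h1 : Nat.card {v : F m → ℝ // v ∈ Had m ∧ IsIntPoint v}
      ≤ Nat.card (Submodule (ZMod 2) (F m) × F m) :=
    Nat.card_le_card_of_injective Φ hΦinj
  -- count submodules
  have hΨinj : Function.Injective
      (fun V : Submodule (ZMod 2) (F m) => (exists_span_fun V).choose) := by
    intro V W h
    have h' : (exists_span_fun V).choose = (exists_span_fun W).choose := h
    have key : Submodule.span (ZMod 2) (Set.range (exists_span_fun V).choose)
        = Submodule.span (ZMod 2) (Set.range (exists_span_fun W).choose) := by rw [h']
    rw [(exists_span_fun V).choose_spec, (exists_span_fun W).choose_spec] at key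
    exact key
  have h2 : Nat.card (Submodule (ZMod 2) (F m)) ≤ Nat.card (Fin m → F m) :=
    Nat.card_le_card_of_injective _ hΨinj
  have hcF : Nat.card (F m) = 2 ^ m := by
    simp [Nat.card_eq_fintype_card]
  have hcG : Nat.card (Fin m → F m) = 2 ^ (m * m) := by
    rw [Nat.card_eq_fintype_card, Fintype.card_fun]
    rw [show Fintype.card (F m) = 2 ^ m by simp, Fintype.card_fin, ← pow_mul]
  have h3 : Nat.card (Submodule (ZMod 2) (F m) × F m)
      = Nat.card (Submodule (ZMod 2) (F m)) * Nat.card (F m) := Nat.card_prod _ _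
  calc Nat.card {v : F m → ℝ // v ∈ Had m ∧ IsIntPoint v}
      ≤ Nat.card (Submodule (ZMod 2) (F m)) * Nat.card (F m) := by rw [← h3]; exact h1
    _ ≤ 2 ^ (m * m) * 2 ^ m := by
        rw [hcF]
        exact Nat.mul_le_mul_right _ (hcG ▸ h2)
    _ = 2 ^ (m * m + m) := by rw [← pow_add]
    _ ≤ 2 ^ (m + 4 * m ^ 2) := Nat.pow_le_pow_right (by norm_num) (by nlinarith)
    _ ≤ (m + 1) * 2 ^ (m + 4 * m ^ 2) := Nat.le_mul_of_pos_left _ (by omega)
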